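/- arXiv:2211.01218 — 7 statements merged into one kernel-verified Lean document; each statement's English description precedes it below -/
import Mathlib

section
/- If Ω ⊂ ℝⁿ is an M-uniform domain with |Ω| ≥ c₀ > 0, then Ω contains an open ball of radius r₀, where r₀ > 0 depends only on M, n, and c₀. -/
/-!
A set of measure at least `c₀` cannot fit in a closed ball of radius `d` once `d` is so small
that such balls have measure `< c₀`; hence it contains two points `x, y` with `|x - y| > d`.
A uniform curve from `x` to `y` passes through a point equidistant from `x` and `y`, at distance
`≥ |x - y| / 2` from both, so the cigar condition puts it at distance `≥ d / (2M)` from `∂Ω`.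
-/

open MeasureTheory Metric Set Filter
open scoped ENNReal Topology

/-- `Ω` is an `M`-uniform domain. -/
def IsMUniformDomain {n : ℕ} (M : ℝ) (Ω : Set (EuclideanSpace ℝ (Fin n))) : Prop :=
  IsOpen Ω ∧ IsConnected Ω ∧
  ∀ x ∈ Ω, ∀ y ∈ Ω, ∃ γ : ℝ → EuclideanSpace ℝ (Fin n),
    ContinuousOn γ (Set.Icc 0 1) ∧ γ 0 = x ∧ γ 1 = y ∧
    (∀ t ∈ Set.Icc (0:ℝ) 1, γ t ∈ Ω) ∧
    eVariationOn γ (Set.Icc 0 1) ≤ ENNReal.ofReal (M * dist x y) ∧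
    ∀ t ∈ Set.Icc (0:ℝ) 1,
      (1 / M) * min (dist (γ t) x) (dist (γ t) y) ≤ infDist (γ t) (frontier Ω)

theorem IsOpen.ball_infDist_frontier_subset {E : Type*} [NormedAddCommGroup E] [NormedSpace ℝ E]
    {Ω : Set E} (hΩ : IsOpen Ω) {z : E} (hz : z ∈ Ω) :
    ball z (infDist z (frontier Ω)) ⊆ Ω := by
  rcases le_or_gt (infDist z (frontier Ω)) 0 with hr | hr
  · simp [ball_eq_empty.2 hr]
  refine (convex_ball z _).isPreconnected.subset_of_closure_inter_subset hΩ
    ⟨z, mem_ball_self hr, hz⟩ fun w ⟨hwc, hwb⟩ => ?_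
  by_contra hwΩ
  have hwf : w ∈ frontier Ω := by rw [hΩ.frontier_eq]; exact ⟨hwc, hwΩ⟩
  exact (infDist_le_dist_of_mem hwf).not_gt (by rwa [dist_comm, ← mem_ball])

theorem exists_dist_eq_dist_of_continuousOn {α : Type*} [PseudoMetricSpace α] {γ : ℝ → α}
    {a b : ℝ} (hab : a ≤ b) (hγ : ContinuousOn γ (Icc a b)) :
    ∃ t ∈ Icc a b, dist (γ t) (γ a) = dist (γ t) (γ b) := by
  have hf : ContinuousOn (fun t => dist (γ t) (γ a) - dist (γ t) (γ b)) (Icc a b) :=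
    ((continuous_id.dist continuous_const).comp_continuousOn hγ).sub
      ((continuous_id.dist continuous_const).comp_continuousOn hγ)
  obtain ⟨t, ht, hft⟩ :=
    intermediate_value_Icc hab hf (show (0 : ℝ) ∈ _ by simp [dist_comm])
  exact ⟨t, ht, sub_eq_zero.mp hft⟩

theorem exists_pos_measure_closedBall_lt {α : Type*} [MetricSpace α] [MeasurableSpace α]
    [OpensMeasurableSpace α] [ProperSpace α] (μ : Measure α) [IsFiniteMeasureOnCompacts μ]
    [NullSingletonClass μ] (x : α) {ε : ℝ≥0∞} (hε : ε ≠ 0) :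
    ∃ d > 0, μ (closedBall x d) < ε := by
  have hlim : Tendsto (fun d => μ (cthickening d {x})) (𝓝[>] 0) (𝓝 0) := by
    simpa using (tendsto_measure_cthickening_of_isCompact (μ := μ)
      (isCompact_singleton (x := x))).mono_left nhdsWithin_le_nhds
  obtain ⟨d, hd, hd0⟩ := ((hlim.eventually_lt_const hε.bot_lt).and self_mem_nhdsWithin).exists
  exact ⟨d, hd0, by rwa [← cthickening_singleton x hd0.le]⟩

theorem exists_lt_dist_of_addHaar_closedBall_lt {E : Type*} [NormedAddCommGroup E]
    [MeasurableSpace E] [BorelSpace E] (μ : Measure E) [μ.IsAddHaarMeasure] {s : Set E}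
    {d : ℝ} (h : μ (closedBall 0 d) < μ s) : ∃ x ∈ s, ∃ y ∈ s, d < dist x y := by
  obtain ⟨x, hx⟩ := nonempty_of_measure_ne_zero (pos_of_gt h).ne'
  by_contra! hfar
  have hs : s ⊆ closedBall x d := fun y hy => by
    rw [mem_closedBall, dist_comm]; exact hfar x hx y hy
  exact (measure_mono hs).not_gt (by rwa [Measure.addHaar_closedBall_center μ])

theorem IsMUniformDomain.exists_ball_subset {n : ℕ} {M : ℝ}
    {Ω : Set (EuclideanSpace ℝ (Fin n))} (hΩ : IsMUniformDomain M Ω) (hM : 0 < M)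
    {x y : EuclideanSpace ℝ (Fin n)} (hx : x ∈ Ω) (hy : y ∈ Ω) :
    ∃ z, ball z (dist x y / (2 * M)) ⊆ Ω := by
  obtain ⟨γ, hγ, rfl, rfl, hγΩ, -, hcigar⟩ := hΩ.2.2 x hx y hy
  obtain ⟨t, ht, hmid⟩ := exists_dist_eq_dist_of_continuousOn zero_le_one hγ
  have hxy : dist (γ 0) (γ 1) ≤ 2 * dist (γ t) (γ 0) := by
    linarith [dist_triangle_left (γ 0) (γ 1) (γ t)]
  have hr : dist (γ 0) (γ 1) / (2 * M) ≤ infDist (γ t) (frontier Ω) :=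
    calc dist (γ 0) (γ 1) / (2 * M) ≤ 1 / M * dist (γ t) (γ 0) := by
          rw [div_le_iff₀ (by positivity)]; field_simp; linarith
      _ ≤ infDist (γ t) (frontier Ω) := by simpa [hmid] using hcigar t ht
  exact ⟨γ t, (ball_subset_ball hr).trans (hΩ.1.ball_infDist_frontier_subset (hγΩ t ht))⟩

/-- If `Ω ⊂ ℝⁿ` is an `M`-uniform domain with `|Ω| ≥ c₀ > 0`, then `Ω` contains an
open ball of radius `r₀ = r₀(M, n, c₀) > 0`. -/
theorem stmt_4 {n : ℕ} (M c₀ : ℝ) (hM : 1 ≤ M) (hc₀ : 0 < c₀) :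
    ∃ r₀ > (0:ℝ), ∀ Ω : Set (EuclideanSpace ℝ (Fin n)), IsMUniformDomain M Ω →
      ENNReal.ofReal c₀ ≤ volume Ω → ∃ z, ball z r₀ ⊆ Ω := by
  have hM₀ : 0 < M := zero_lt_one.trans_le hM
  rcases subsingleton_or_nontrivial (EuclideanSpace ℝ (Fin n)) with _ | _
  · refine ⟨1, one_pos, fun Ω hΩ _ => ?_⟩
    obtain ⟨z, hz⟩ := hΩ.2.1.nonempty
    exact ⟨z, fun w _ => Subsingleton.elim z w ▸ hz⟩
  obtain ⟨d, hd, hvol⟩ :=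
    exists_pos_measure_closedBall_lt volume (0 : EuclideanSpace ℝ (Fin n))
      (ENNReal.ofReal_pos.2 hc₀).ne'
  refine ⟨d / (2 * M), by positivity, fun Ω hΩ hΩvol => ?_⟩
  obtain ⟨x, hx, y, hy, hxy⟩ :=
    exists_lt_dist_of_addHaar_closedBall_lt volume (hvol.trans_le hΩvol)
  obtain ⟨z, hz⟩ := hΩ.exists_ball_subset hM₀ hx hy
  exact ⟨z, (ball_subset_ball (by gcongr)).trans hz⟩
end

section
/- In the construction Ẽ = (A₂ ∪ E) \ A₁ with A₁ = {x : ∃r>0, |E ∩ B_r(x)| = 0} and A₂ = {x : ∃r>0, |E ∩ B_r(x)| = ω_n rⁿ}, the sets A₁ and A₂ are open and disjoint, |E ∩ A₁| = 0, and |A₂ \ E| = 0. -/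
/-!
`A₁` is the complement of the support of `μ|E` and, since balls have finite measure, `A₂` is the
complement of the support of `μ|Eᶜ`. Complements of supports are open, and a measure vanishes
off its support in a second countable space, which gives `|E ∩ A₁| = |Eᶜ ∩ A₂| = 0`. The two
supports cover the space because `μ|E + μ|Eᶜ = μ` charges every open set, so `A₁` and `A₂` are
disjoint.
-/

open MeasureTheory Metric Set Filter
open scoped ENNReal Topology

namespace MeasureTheory

variable {X : Type*} [MeasurableSpace X] {μ : Measure X}

lemma measure_inter_eq_iff_measure_sdiff_eq_zero {s t : Set X} (hs : NullMeasurableSet s μ)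
    (ht : μ t ≠ ∞) : μ (s ∩ t) = μ t ↔ μ (t \ s) = 0 := by
  have hsplit : μ (t ∩ s) + μ (t \ s) = μ t := measure_inter_add_sdiff₀ t hs
  rw [inter_comm]
  constructor
  · intro h
    rw [h] at hsplit
    exact (ENNReal.add_right_inj ht).1 (hsplit.trans (add_zero _).symm)
  · intro h
    rwa [h, add_zero] at hsplit

namespace Measure

section TopologicalSpace

variable [TopologicalSpace X]

lemma measure_inter_compl_support_restrict [OpensMeasurableSpace X] [HereditarilyLindelofSpace X]
    (s : Set X) : μ (s ∩ (μ.restrict s).supportᶜ) = 0 := by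
  rw [inter_comm, ← restrict_apply isOpen_compl_support.measurableSet]
  exact measure_compl_support

lemma disjoint_compl_support_restrict_compl [μ.IsOpenPosMeasure] {s : Set X}
    (hs : MeasurableSet s) : Disjoint (μ.restrict s).supportᶜ (μ.restrict sᶜ).supportᶜ := by
  have hcover : (μ.restrict s).support ∪ (μ.restrict sᶜ).support = univ := by
    rw [← support_add, restrict_add_restrict_compl hs, support_eq_univ]
  rw [disjoint_iff, ← compl_sup]
  exact compl_eq_bot.2 hcover

end TopologicalSpace

section PseudoMetricSpace

variable [PseudoMetricSpace X] [OpensMeasurableSpace X]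

lemma compl_support_restrict_eq_setOf_ball (s : Set X) :
    (μ.restrict s).supportᶜ = {x | ∃ r > 0, μ (s ∩ ball x r) = 0} := by
  ext x
  rw [mem_compl_iff, nhds_basis_ball.notMem_measureSupport]
  simp only [restrict_apply measurableSet_ball, inter_comm, mem_ofPred_eq]

lemma compl_support_restrict_compl_eq_setOf_ball [ProperSpace X] [IsFiniteMeasureOnCompacts μ]
    {s : Set X} (hs : NullMeasurableSet s μ) :
    (μ.restrict sᶜ).supportᶜ = {x | ∃ r > 0, μ (s ∩ ball x r) = μ (ball x r)} := by
  simp only [compl_support_restrict_eq_setOf_ball, inter_comm sᶜ, ← sdiff_eq,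
    measure_inter_eq_iff_measure_sdiff_eq_zero hs measure_ball_lt_top.ne]

end PseudoMetricSpace

end Measure

end MeasureTheory

/-- In the construction `Ẽ = (A₂ ∪ E) \ A₁`, with
`A₁ = {x : ∃ r > 0, |E ∩ B_r(x)| = 0}` and `A₂ = {x : ∃ r > 0, |E ∩ B_r(x)| = ωₙ rⁿ}`,
the sets `A₁, A₂` are open and disjoint, `|E ∩ A₁| = 0` and `|A₂ \ E| = 0`. -/
theorem stmt_6 {n : ℕ} (E : Set (EuclideanSpace ℝ (Fin n))) (hE : MeasurableSet E)
    (A1 A2 : Set (EuclideanSpace ℝ (Fin n)))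
    (hA1 : A1 = {x | ∃ r > (0:ℝ), volume (E ∩ ball x r) = 0})
    (hA2 : A2 = {x | ∃ r > (0:ℝ), volume (E ∩ ball x r) = volume (ball x r)}) :
    IsOpen A1 ∧ IsOpen A2 ∧ Disjoint A1 A2 ∧
      volume (E ∩ A1) = 0 ∧ volume (A2 \ E) = 0 := by
  rw [← Measure.compl_support_restrict_eq_setOf_ball] at hA1
  rw [← Measure.compl_support_restrict_compl_eq_setOf_ball hE.nullMeasurableSet] at hA2
  subst hA1 hA2
  refine ⟨Measure.isOpen_compl_support, Measure.isOpen_compl_support,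
    Measure.disjoint_compl_support_restrict_compl hE,
    Measure.measure_inter_compl_support_restrict E, ?_⟩
  rw [sdiff_eq, inter_comm]
  exact Measure.measure_inter_compl_support_restrict Eᶜ
end

section
/- Let c > 0 and let D_i ⊂ ℝⁿ be bounded measurable sets with |B_r(x) ∩ D_i| > c rⁿ for all x ∈ ∂D_i and 0 < r < diam(D_i), and suppose χ_{D_i} → χ_D in L¹(ℝⁿ). Then for every ε > 0 there is N such that for all i > N, D is contained in the open ε-neighborhood of D_i. -/
open MeasureTheory Metric Set Filter
open scoped ENNReal Topology

/-!
Cover `D₀` by finitely many balls of radius `ε / 2` centred in `D₀`; each meets `D₀` in positive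
measure. Once `|D_i Δ D₀|` is below all these finitely many masses, `D_i` must meet every one of
the balls, so each point of `D₀` lies within `ε` of `D_i`.
-/

lemma nonempty_inter_of_measure_symmDiff_lt {α : Type*} [MeasurableSpace α] {μ : Measure α}
    {s t u : Set α} (h : μ (symmDiff s t) < μ (t ∩ u)) : (s ∩ u).Nonempty := by
  by_contra hempty
  have hsub : t ∩ u ⊆ symmDiff s t := fun z hz =>
    Or.inr ⟨hz.1, fun hzs => hempty ⟨z, hzs, hz.2⟩⟩
  exact (measure_mono hsub).not_gt h

theorem TotallyBounded.eventually_subset_thickening_of_tendsto_measure_symmDiff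
    {α ι : Type*} [PseudoMetricSpace α] [MeasurableSpace α] {μ : Measure α} {l : Filter ι}
    {s : ι → Set α} {t : Set α} (ht : TotallyBounded t)
    (hpos : ∀ x ∈ t, ∀ r : ℝ, 0 < r → 0 < μ (t ∩ ball x r))
    (hconv : Tendsto (fun i => μ (symmDiff (s i) t)) l (𝓝 0)) {ε : ℝ} (hε : 0 < ε) :
    ∀ᶠ i in l, t ⊆ thickening ε (s i) := by
  obtain ⟨F, hFt, hFfin, htF⟩ := finite_approx_of_totallyBounded ht (ε / 2) (half_pos hε)
  have hsmall : ∀ᶠ i in l, ∀ y ∈ F, μ (symmDiff (s i) t) < μ (t ∩ ball y (ε / 2)) :=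
    (eventually_all_finite hFfin).2 fun y hy =>
      hconv.eventually_lt_const (hpos y (hFt hy) _ (half_pos hε))
  filter_upwards [hsmall] with i hi x hx
  obtain ⟨y, hyF, hxy⟩ := mem_iUnion₂.1 (htF hx)
  obtain ⟨z, hzs, hzy⟩ := nonempty_inter_of_measure_symmDiff_lt (hi y hyF)
  refine mem_thickening_iff.2 ⟨z, hzs, ?_⟩
  calc dist x z ≤ dist x y + dist z y := dist_triangle_right x z y
    _ < ε / 2 + ε / 2 := add_lt_add (mem_ball.1 hxy) (mem_ball.1 hzy)
    _ = ε := add_halves ε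

theorem stmt_7_general {n : ℕ}
    (D : ℕ → Set (EuclideanSpace ℝ (Fin n))) (D₀ : Set (EuclideanSpace ℝ (Fin n)))
    (hD₀b : Bornology.IsBounded D₀)
    (hconv : Tendsto (fun i => volume (symmDiff (D i) D₀)) atTop (nhds 0))
    (hrep : ∀ x ∈ D₀, ∀ r : ℝ, 0 < r → 0 < volume (D₀ ∩ ball x r)) :
    ∀ ε : ℝ, 0 < ε → ∃ N : ℕ, ∀ i > N, D₀ ⊆ Metric.thickening ε (D i) := by
  intro ε hε
  have htb : TotallyBounded D₀ := hD₀b.isCompact_closure.totallyBounded.subset subset_closure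
  obtain ⟨N, hN⟩ := eventually_atTop.1
    (htb.eventually_subset_thickening_of_tendsto_measure_symmDiff hrep hconv hε)
  exact ⟨N, fun i hi => hN i hi.le⟩

/-- If `D_i ∈ 𝒟_c` (lower volume density `c` at boundary points) and `χ_{D_i} → χ_D`
in `L¹`, where `D` is normalized so that `|D ∩ B_r(x)| > 0` for all `x ∈ D`, `r > 0`,
then for every `ε > 0`, eventually `D` is contained in the `ε`-neighborhood of `D_i`. -/
theorem stmt_7 {n : ℕ} (c : ℝ) (hc : 0 < c)
    (D : ℕ → Set (EuclideanSpace ℝ (Fin n))) (D₀ : Set (EuclideanSpace ℝ (Fin n)))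
    (hDm : ∀ i, MeasurableSet (D i)) (hDb : ∀ i, Bornology.IsBounded (D i))
    (hD₀m : MeasurableSet D₀) (hD₀b : Bornology.IsBounded D₀)
    (hdens : ∀ i, ∀ x ∈ frontier (D i), ∀ r : ℝ, 0 < r → r < diam (D i) →
      ENNReal.ofReal (c * r ^ n) < volume (ball x r ∩ D i))
    (hconv : Tendsto (fun i => volume (symmDiff (D i) D₀)) atTop (nhds 0))
    (hrep : ∀ x ∈ D₀, ∀ r : ℝ, 0 < r → 0 < volume (D₀ ∩ ball x r)) :
    ∀ ε : ℝ, 0 < ε → ∃ N : ℕ, ∀ i > N, D₀ ⊆ Metric.thickening ε (D i) :=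
  stmt_7_general D D₀ hD₀b hconv hrep
end

section
/- Let D_i ⊂ ℝⁿ be bounded measurable sets with χ_{D_i} → χ_D in L¹(ℝⁿ), where D is normalized so that |D ∩ B_r(x)| < ω_n rⁿ for all x ∉ int(D) and r > 0. Then for every ε > 0 there is N such that for all i > N, the inner ε-core (D_i)_ε := {x ∈ D_i : B_ε(x) ⊂ D_i} is contained in D. -/
/-!
A point `x` of the core `(D_i)_ε` lying outside `D` is not an interior point of `D`, and
`B_ε(x) \ D ⊆ D_i \ D`. So it suffices to bound `|B_ε(x) \ D|` from below uniformly over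
`x ∉ int D`. Each such quantity is positive by the normalization of `D`. Far from the bounded
set `D` it equals `|B_ε|`; on the compact remainder, cover by finitely many balls `B_{ε/2}(y)`:
whenever `x ∈ B_{ε/2}(y)` we have `B_{ε/2}(y) ⊆ B_ε(x)`, so the finitely many positive numbers
`|B_{ε/2}(y) \ D|` give the bound.
-/

open MeasureTheory Metric Set Filter

theorem measure_sdiff_pos_of_measure_inter_lt {α : Type*} [MeasurableSpace α] {μ : Measure α}
    {s t : Set α} (h : μ (s ∩ t) < μ t) : 0 < μ (t \ s) := by
  refine pos_iff_ne_zero.2 fun h0 => h.not_ge ?_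
  simpa [h0, inter_comm] using measure_le_inter_add_sdiff μ t s

theorem IsCompact.exists_pos_le_measure_ball_sdiff {X : Type*} [PseudoMetricSpace X]
    [MeasurableSpace X] (μ : Measure X) {K s : Set X} (hK : IsCompact K) {r : ℝ}
    (hpos : ∀ y ∈ K, 0 < μ (ball y (r / 2) \ s)) :
    ∃ δ > 0, ∀ x ∈ K, δ ≤ μ (ball x r \ s) := by
  obtain ⟨t, htK, hKt⟩ := hK.elim_nhds_subcover (fun y => ball y (r / 2)) fun y hy =>
    ball_mem_nhds y <| by
      by_contra! hr
      simpa [ball_eq_empty.2 hr] using hpos y hy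
  refine ⟨t.inf fun y => μ (ball y (r / 2) \ s),
    (Finset.lt_inf_iff ENNReal.zero_lt_top).2 fun y hy => hpos y (htK y hy), fun x hx => ?_⟩
  obtain ⟨y, hy, hxy⟩ := mem_iUnion₂.1 (hKt hx)
  have hball : ball y (r / 2) ⊆ ball x r :=
    ball_subset_ball' (by linarith [mem_ball'.1 hxy])
  exact (Finset.inf_le hy).trans (measure_mono (sdiff_subset_sdiff_left hball))

theorem Bornology.IsBounded.exists_pos_le_measure_ball_sdiff {E : Type*} [NormedAddCommGroup E]
    [ProperSpace E] [MeasurableSpace E] [BorelSpace E] (μ : Measure E) [μ.IsAddHaarMeasure]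
    {s : Set E} (hs : Bornology.IsBounded s)
    (hrep : ∀ x ∉ interior s, ∀ r : ℝ, 0 < r → μ (s ∩ ball x r) < μ (ball x r))
    {r : ℝ} (hr : 0 < r) : ∃ δ > 0, ∀ x ∉ interior s, δ ≤ μ (ball x r \ s) := by
  obtain ⟨R, hR⟩ := hs.subset_closedBall (0 : E)
  obtain ⟨δ, hδ, hδK⟩ := (isCompact_closedBall (0 : E) (R + r)).diff isOpen_interior
    |>.exists_pos_le_measure_ball_sdiff μ (r := r) fun y hy =>
      measure_sdiff_pos_of_measure_inter_lt (hrep y hy.2 _ (half_pos hr))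
  refine ⟨min δ (μ (ball 0 r)), lt_min hδ (measure_ball_pos μ 0 hr), fun x hx => ?_⟩
  by_cases hxK : x ∈ closedBall (0 : E) (R + r)
  · exact (min_le_left _ _).trans (hδK x ⟨hxK, hx⟩)
  have hdisj : Disjoint (ball x r) s := by
    refine Set.disjoint_left.2 fun z hz hzs => hxK ?_
    have := hR hzs
    rw [mem_ball] at hz
    rw [mem_closedBall] at this ⊢
    linarith [dist_triangle_left x 0 z]
  rw [hdisj.sdiff_eq_left, Measure.addHaar_ball_center μ x]
  exact min_le_right _ _

theorem stmt_8_general {n : ℕ}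
    (D : ℕ → Set (EuclideanSpace ℝ (Fin n))) (D₀ : Set (EuclideanSpace ℝ (Fin n)))
    (hD₀b : Bornology.IsBounded D₀)
    (hconv : Tendsto (fun i => volume (symmDiff (D i) D₀)) atTop (nhds 0))
    (hrep : ∀ x ∉ interior D₀, ∀ r : ℝ, 0 < r →
      volume (D₀ ∩ ball x r) < volume (ball x r)) :
    ∀ ε : ℝ, 0 < ε → ∃ N : ℕ, ∀ i > N,
      {x | x ∈ D i ∧ ball x ε ⊆ D i} ⊆ D₀ := by
  intro ε hε
  obtain ⟨δ, hδ, hδle⟩ := hD₀b.exists_pos_le_measure_ball_sdiff volume hrep hε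
  obtain ⟨N, hN⟩ := eventually_atTop.1 (hconv.eventually_lt_const hδ)
  refine ⟨N, fun i hi x ⟨_, hxε⟩ => ?_⟩
  by_contra hx
  have hcore : ball x ε \ D₀ ⊆ symmDiff (D i) D₀ :=
    fun z hz => Or.inl ⟨hxε hz.1, hz.2⟩
  exact (hN i hi.le).not_ge
    ((hδle x fun hint => hx (interior_subset hint)).trans (measure_mono hcore))

/-- If `χ_{D_i} → χ_D` in `L¹`, where `D` is normalized so that
`|D ∩ B_r(x)| < ωₙ rⁿ` for all `x ∉ int D` and `r > 0`, then for every `ε > 0`,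
eventually the inner `ε`-core `(D_i)_ε = {x ∈ D_i : B_ε(x) ⊆ D_i}` is contained in `D`. -/
theorem stmt_8 {n : ℕ}
    (D : ℕ → Set (EuclideanSpace ℝ (Fin n))) (D₀ : Set (EuclideanSpace ℝ (Fin n)))
    (hDm : ∀ i, MeasurableSet (D i)) (hDb : ∀ i, Bornology.IsBounded (D i))
    (hD₀m : MeasurableSet D₀) (hD₀b : Bornology.IsBounded D₀)
    (hconv : Tendsto (fun i => volume (symmDiff (D i) D₀)) atTop (nhds 0))
    (hrep : ∀ x ∉ interior D₀, ∀ r : ℝ, 0 < r →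
      volume (D₀ ∩ ball x r) < volume (ball x r)) :
    ∀ ε : ℝ, 0 < ε → ∃ N : ℕ, ∀ i > N,
      {x | x ∈ D i ∧ ball x ε ⊆ D i} ⊆ D₀ :=
  stmt_8_general D D₀ hD₀b hconv hrep
end

section
/- Let c > 0 and let D_i ⊂ ℝⁿ be bounded measurable sets satisfying |B_r(x) ∩ D_i| > c rⁿ for all x ∈ ∂D_i and 0 < r < diam(D_i), with diam(D_i) uniformly bounded below, and χ_{D_i} → χ_D in L¹. Then for every ε > 0 there is N such that for all i > N, D_i is contained in the ε-neighborhood of D. Combined with containment of D in the ε-neighborhood of D_i, this yields Hausdorff convergence d^H(D_i, D) → 0. -/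
/-!
Fix `ε > 0` and a radius `ρ ≤ ε / 2` below the uniform diameter bound. If a point `x ∈ D_i`
lies at distance `≥ ε` from `D`, then `B_{2ρ}(x)` misses `D`. Either `B_ρ(x) ⊆ D_i`, or the
connected ball `B_ρ(x)` meets `∂D_i` at some `y`, and then `B_ρ(y) ⊆ B_{2ρ}(x)`
carries `D_i`-mass `> c ρⁿ` by the density condition. Either way `|D_i \ D|` is at least
`min (c ρⁿ) |B_ρ|`, which is impossible for large `i`.
-/

open MeasureTheory Metric Set Filter
open scoped ENNReal Topology

theorem IsPreconnected.inter_frontier_nonempty {α : Type*} [TopologicalSpace α] {s t : Set α}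
    (hs : IsPreconnected s) (hst : (s ∩ t).Nonempty) (hst' : (s \ t).Nonempty) :
    (s ∩ frontier t).Nonempty := by
  by_contra h
  have hcover : s ⊆ interior t ∪ interior tᶜ := by
    rw [← compl_frontier_eq_union_interior]
    exact fun x hx hxt => h ⟨x, hx, hxt⟩
  have hdisj : Disjoint (interior t) (interior tᶜ) :=
    disjoint_compl_right.mono interior_subset interior_subset
  rcases hs.subset_or_subset isOpen_interior isOpen_interior hdisj hcover with hsub | hsub
  · obtain ⟨x, hxs, hxt⟩ := hst'
    exact hxt (interior_subset (hsub hxs))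
  · obtain ⟨x, hxs, hxt⟩ := hst
    exact interior_subset (hsub hxs) hxt

theorem Metric.hausdorffDist_le_of_subset_thickening {X : Type*} [PseudoMetricSpace X]
    {s t : Set X} {r : ℝ} (hr : 0 ≤ r) (hs : s ⊆ thickening r t) (ht : t ⊆ thickening r s) :
    hausdorffDist s t ≤ r := by
  refine hausdorffDist_le_of_mem_dist hr (fun x hx => ?_) (fun x hx => ?_)
  · obtain ⟨y, hy, hxy⟩ := mem_thickening_iff.1 (hs hx)
    exact ⟨y, hy, hxy.le⟩
  · obtain ⟨y, hy, hxy⟩ := mem_thickening_iff.1 (ht hx)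
    exact ⟨y, hy, hxy.le⟩

theorem Metric.tendsto_hausdorffDist_zero_of_eventually_subset_thickening {ι X : Type*}
    [PseudoMetricSpace X] {l : Filter ι} {s : ι → Set X} {t : Set X}
    (hs : ∀ ε > 0, ∀ᶠ i in l, s i ⊆ thickening ε t)
    (ht : ∀ ε > 0, ∀ᶠ i in l, t ⊆ thickening ε (s i)) :
    Tendsto (fun i => hausdorffDist (s i) t) l (𝓝 0) := by
  rw [Metric.tendsto_nhds]
  intro ε hε
  filter_upwards [hs (ε / 2) (half_pos hε), ht (ε / 2) (half_pos hε)] with i hsi hti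
  rw [Real.dist_0_eq_abs, abs_of_nonneg hausdorffDist_nonneg]
  exact (hausdorffDist_le_of_subset_thickening (half_pos hε).le hsi hti).trans_lt
    (half_lt_self hε)

section DensityAtFrontier

variable {E : Type*} [NormedAddCommGroup E] [NormedSpace ℝ E] [MeasurableSpace E]

theorem min_measure_ball_le_measure_diff (μ : Measure E) {A B : Set E} {x : E} {ρ : ℝ}
    {m : ℝ≥0∞} (hρ : 0 ≤ ρ) (hxA : x ∈ A) (hxB : x ∉ thickening (2 * ρ) B)
    (hdens : ∀ y ∈ frontier A, m ≤ μ (ball y ρ ∩ A)) :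
    min m (μ (ball x ρ)) ≤ μ (A \ B) := by
  have hfar : ball x (2 * ρ) ∩ A ⊆ A \ B := fun y ⟨hy, hyA⟩ =>
    ⟨hyA, fun hyB => hxB (mem_thickening_iff.2 ⟨y, hyB, mem_ball'.1 hy⟩)⟩
  by_cases hball : ball x ρ ⊆ A
  · refine (min_le_right _ _).trans (measure_mono fun y hy => hfar ⟨?_, hball hy⟩)
    exact ball_subset_ball (by linarith) hy
  · obtain ⟨z, hz, hzA⟩ := not_subset.1 hball
    obtain ⟨y, hyx, hyA⟩ := (convex_ball x ρ).isPreconnected.inter_frontier_nonempty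
      ⟨x, mem_ball_self (pos_of_mem_ball hz), hxA⟩ ⟨z, hz, hzA⟩
    have hyball : ball y ρ ⊆ ball x (2 * ρ) :=
      ball_subset_ball' (by linarith [mem_ball.1 hyx])
    exact (min_le_left _ _).trans
      ((hdens y hyA).trans (measure_mono fun w ⟨hw, hwA⟩ => hfar ⟨hyball hw, hwA⟩))

theorem eventually_subset_thickening_of_tendsto_measure_diff [BorelSpace E] (μ : Measure E)
    [μ.IsAddHaarMeasure] {ι : Type*} {l : Filter ι} {D : ι → Set E} {D₀ : Set E} {n : ℕ}
    {c d₀ : ℝ} (hc : 0 < c) (hd₀ : 0 < d₀)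
    (hdens : ∀ i, ∀ x ∈ frontier (D i), ∀ r : ℝ, 0 < r → r < d₀ →
      ENNReal.ofReal (c * r ^ n) < μ (ball x r ∩ D i))
    (hconv : Tendsto (fun i => μ (D i \ D₀)) l (𝓝 0)) :
    ∀ ε > 0, ∀ᶠ i in l, D i ⊆ thickening ε D₀ := by
  intro ε hε
  set ρ := min ε d₀ / 2 with hρ_def
  have hρ : 0 < ρ := by positivity
  have hρε : 2 * ρ ≤ ε := by linarith [hρ_def, min_le_left ε d₀]
  have hρd : ρ < d₀ := by linarith [hρ_def, min_le_right ε d₀]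
  set δ := min (ENNReal.ofReal (c * ρ ^ n)) (μ (ball (0 : E) ρ))
  have hδ : 0 < δ := lt_min (ENNReal.ofReal_pos.2 (by positivity)) (measure_ball_pos μ 0 hρ)
  filter_upwards [hconv.eventually_lt_const hδ] with i hi x hx
  by_contra hxε
  have hδle := min_measure_ball_le_measure_diff μ hρ.le hx
    (fun h => hxε (thickening_mono hρε D₀ h)) fun y hy => (hdens i y hy ρ hρ hρd).le
  rw [Measure.addHaar_ball_center] at hδle
  exact (hδle.trans_lt hi).false

end DensityAtFrontier

theorem stmt_9_general {n : ℕ} (c d₀ : ℝ) (hc : 0 < c) (hd₀ : 0 < d₀)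
    (D : ℕ → Set (EuclideanSpace ℝ (Fin n))) (D₀ : Set (EuclideanSpace ℝ (Fin n)))
    (hdiam : ∀ i, d₀ ≤ diam (D i))
    (hdens : ∀ i, ∀ x ∈ frontier (D i), ∀ r : ℝ, 0 < r → r < diam (D i) →
      ENNReal.ofReal (c * r ^ n) < volume (ball x r ∩ D i))
    (hconv : Tendsto (fun i => volume (symmDiff (D i) D₀)) atTop (nhds 0)) :
    (∀ ε : ℝ, 0 < ε → ∃ N : ℕ, ∀ i > N, D i ⊆ Metric.thickening ε D₀) ∧
    ((∀ ε : ℝ, 0 < ε → ∃ N : ℕ, ∀ i > N, D₀ ⊆ Metric.thickening ε (D i)) →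
      Tendsto (fun i => Metric.hausdorffDist (D i) D₀) atTop (nhds 0)) := by
  have hdiff : Tendsto (fun i => volume (D i \ D₀)) atTop (𝓝 0) :=
    tendsto_of_tendsto_of_tendsto_of_le_of_le tendsto_const_nhds hconv (fun _ => zero_le)
      fun i => measure_mono (le_sup_left.trans_eq (symmDiff_def (D i) D₀).symm)
  have hsub := eventually_subset_thickening_of_tendsto_measure_diff volume hc hd₀
    (fun i x hx r hr hrd => hdens i x hx r hr (hrd.trans_le (hdiam i))) hdiff
  refine ⟨fun ε hε => ?_, fun H => tendsto_hausdorffDist_zero_of_eventually_subset_thickening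
    hsub fun ε hε => ?_⟩
  · obtain ⟨N, hN⟩ := eventually_atTop.1 (hsub ε hε)
    exact ⟨N, fun i hi => hN i hi.le⟩
  · obtain ⟨N, hN⟩ := H ε hε
    exact (eventually_gt_atTop N).mono hN

/-- If `D_i ∈ 𝒟_c` have diameters uniformly bounded below and `χ_{D_i} → χ_D` in `L¹`
(with `D` a representative satisfying `0 < |D ∩ B_r(x)|` for `x ∈ ∂D`, `r > 0`), then
eventually `D_i` is contained in the `ε`-neighborhood of `D`; combined with the reverse
containment this gives Hausdorff convergence `d^H(D_i, D) → 0`. -/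
theorem stmt_9 {n : ℕ} (c d₀ : ℝ) (hc : 0 < c) (hd₀ : 0 < d₀)
    (D : ℕ → Set (EuclideanSpace ℝ (Fin n))) (D₀ : Set (EuclideanSpace ℝ (Fin n)))
    (hDm : ∀ i, MeasurableSet (D i)) (hDb : ∀ i, Bornology.IsBounded (D i))
    (hD₀m : MeasurableSet D₀) (hD₀b : Bornology.IsBounded D₀)
    (hdiam : ∀ i, d₀ ≤ diam (D i))
    (hdens : ∀ i, ∀ x ∈ frontier (D i), ∀ r : ℝ, 0 < r → r < diam (D i) →
      ENNReal.ofReal (c * r ^ n) < volume (ball x r ∩ D i))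
    (hconv : Tendsto (fun i => volume (symmDiff (D i) D₀)) atTop (nhds 0))
    (hrep : ∀ x ∈ frontier D₀, ∀ r : ℝ, 0 < r → 0 < volume (D₀ ∩ ball x r)) :
    (∀ ε : ℝ, 0 < ε → ∃ N : ℕ, ∀ i > N, D i ⊆ Metric.thickening ε D₀) ∧
    ((∀ ε : ℝ, 0 < ε → ∃ N : ℕ, ∀ i > N, D₀ ⊆ Metric.thickening ε (D i)) →
      Tendsto (fun i => Metric.hausdorffDist (D i) D₀) atTop (nhds 0)) :=
  stmt_9_general c d₀ hc hd₀ D D₀ hdiam hdens hconv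
end

section
/- Let c > 0 and suppose D_i ⊂ ℝⁿ are bounded measurable sets each satisfying |B_r(x) ∩ D_i| > c rⁿ for all x ∈ ∂D_i and 0 < r < diam(D_i), and χ_{D_i} → χ_D in L¹(ℝⁿ). Then, after modifying D on a set of measure zero (using the normalized representative whose boundary equals the support of its Gauss–Green measure), D satisfies |B_r(x) ∩ D| ≥ c rⁿ for all x ∈ ∂D and 0 < r < diam(D). -/
/-! A boundary point `x` of `D₀` is a limit of boundary points `xᵢ` of `Dᵢ`: since `D₀` and its
complement both have positive measure in every ball around `x`, so do `Dᵢ` and its complement for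
large `i`, and a connected ball then meets `∂Dᵢ`. Likewise `diam Dᵢ` eventually exceeds any
`r' < diam D₀`. For `r' < r` the density bound for `Dᵢ` at `xᵢ` gives
`c r'ⁿ < |B_{r'}(xᵢ) ∩ Dᵢ| ≤ |B_r(x) ∩ Dᵢ|`, which passes to the `L¹` limit; then let `r' → r`. -/

open MeasureTheory Metric Set Filter
open scoped ENNReal Topology symmDiff

theorem IsPreconnected.inter_frontier_nonempty_s10 {X : Type*} [TopologicalSpace X] {U s : Set X}
    (hU : IsPreconnected U) (h₁ : (U ∩ s).Nonempty) (h₂ : (U \ s).Nonempty) :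
    (U ∩ frontier s).Nonempty := by
  by_contra h
  have hcover : U ⊆ interior s ∪ interior sᶜ := fun w hw => by
    rw [interior_compl]
    by_cases hi : w ∈ interior s
    · exact Or.inl hi
    · exact Or.inr fun hcl => h ⟨w, hw, hcl, hi⟩
  have hdisj : Disjoint (interior s) (interior sᶜ) :=
    disjoint_compl_right.mono interior_subset interior_subset
  rcases hU.subset_or_subset isOpen_interior isOpen_interior hdisj hcover with hs | hsc
  · obtain ⟨w, hwU, hws⟩ := h₂
    exact hws (interior_subset (hs hwU))
  · obtain ⟨w, hwU, hws⟩ := h₁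
    exact interior_subset (hsc hwU) hws

section SymmDiff

variable {α ι : Type*} [MeasurableSpace α] {μ : Measure α}

theorem measure_inter_le_add_symmDiff (μ : Measure α) (A s t : Set α) :
    μ (A ∩ s) ≤ μ (A ∩ t) + μ (s ∆ t) :=
  calc μ (A ∩ s) ≤ μ (A ∩ t ∪ s \ t) := measure_mono fun w ⟨hA, hs⟩ => by
        by_cases ht : w ∈ t
        exacts [Or.inl ⟨hA, ht⟩, Or.inr ⟨hs, ht⟩]
    _ ≤ μ (A ∩ t) + μ (s \ t) := measure_union_le _ _
    _ ≤ μ (A ∩ t) + μ (s ∆ t) := by gcongr; exact subset_union_left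

variable {l : Filter ι} {s : ι → Set α} {t A : Set α}

theorem le_measure_inter_of_tendsto_symmDiff [l.NeBot]
    (hst : Tendsto (fun i => μ (s i ∆ t)) l (𝓝 0)) {a : ℝ≥0∞}
    (ha : ∀ᶠ i in l, a ≤ μ (A ∩ s i)) : a ≤ μ (A ∩ t) := by
  have hlim : Tendsto (fun i => μ (A ∩ t) + μ (s i ∆ t)) l (𝓝 (μ (A ∩ t))) := by
    simpa using tendsto_const_nhds.add hst
  exact ge_of_tendsto hlim (ha.mono fun i hi => hi.trans (measure_inter_le_add_symmDiff μ A _ _))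

theorem eventually_measure_inter_pos_of_tendsto_symmDiff
    (hst : Tendsto (fun i => μ (s i ∆ t)) l (𝓝 0)) (hA : 0 < μ (A ∩ t)) :
    ∀ᶠ i in l, 0 < μ (A ∩ s i) := by
  filter_upwards [hst.eventually_lt_const hA] with i hi
  refine pos_iff_ne_zero.2 fun h0 => hi.not_ge ?_
  simpa [h0, symmDiff_comm] using measure_inter_le_add_symmDiff μ A t (s i)

theorem eventually_measure_diff_pos_of_tendsto_symmDiff
    (hst : Tendsto (fun i => μ (s i ∆ t)) l (𝓝 0)) (hA : 0 < μ (A \ t)) :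
    ∀ᶠ i in l, 0 < μ (A \ s i) := by
  simp only [sdiff_eq] at hA ⊢
  exact eventually_measure_inter_pos_of_tendsto_symmDiff
    (by simpa only [compl_symmDiff_compl] using hst) hA

theorem eventually_inter_frontier_nonempty_of_tendsto_symmDiff [TopologicalSpace α]
    (hst : Tendsto (fun i => μ (s i ∆ t)) l (𝓝 0)) (hA : IsPreconnected A)
    (h₁ : 0 < μ (A ∩ t)) (h₂ : 0 < μ (A \ t)) :
    ∀ᶠ i in l, (A ∩ frontier (s i)).Nonempty := by
  filter_upwards [eventually_measure_inter_pos_of_tendsto_symmDiff hst h₁,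
    eventually_measure_diff_pos_of_tendsto_symmDiff hst h₂] with i hin hout
  exact hA.inter_frontier_nonempty_s10 (nonempty_of_measure_ne_zero hin.ne')
    (nonempty_of_measure_ne_zero hout.ne')

end SymmDiff

section Metric

variable {X ι : Type*} [PseudoMetricSpace X]

theorem measure_ball_inter_pos_of_mem_closure [MeasurableSpace X] {μ : Measure X}
    [μ.IsOpenPosMeasure] {t : Set X}
    (hfr : ∀ x ∈ frontier t, ∀ r : ℝ, 0 < r → 0 < μ (t ∩ ball x r))
    {x : X} (hx : x ∈ closure t) {r : ℝ} (hr : 0 < r) : 0 < μ (ball x r ∩ t) := by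
  rw [closure_eq_interior_union_frontier] at hx
  rcases hx with hint | hfx
  · calc 0 < μ (ball x r ∩ interior t) :=
          (isOpen_ball.inter isOpen_interior).measure_pos μ ⟨x, mem_ball_self hr, hint⟩
      _ ≤ μ (ball x r ∩ t) := by gcongr; exact interior_subset
  · rw [inter_comm]
    exact hfr x hfx r hr

theorem eventually_lt_diam {l : Filter ι} {s : ι → Set X} {t : Set X}
    (hb : ∀ i, Bornology.IsBounded (s i))
    (happrox : ∀ y ∈ t, ∀ δ : ℝ, 0 < δ → ∀ᶠ i in l, (ball y δ ∩ s i).Nonempty)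
    {r : ℝ} (hr₀ : 0 ≤ r) (hr : r < diam t) : ∀ᶠ i in l, r < diam (s i) := by
  obtain ⟨y, hy, z, hz, hyz⟩ : ∃ y ∈ t, ∃ z ∈ t, r < dist y z := by
    by_contra! h
    exact hr.not_ge (diam_le_of_forall_dist_le hr₀ h)
  set δ := (dist y z - r) / 2
  have hδ : 0 < δ := half_pos (sub_pos.2 hyz)
  filter_upwards [happrox y hy δ hδ, happrox z hz δ hδ] with i ⟨y', hy'y, hy'⟩ ⟨z', hz'z, hz'⟩
  calc r = dist y z - 2 * δ := by ring
    _ < dist y' z' := by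
        have := dist_triangle4 y y' z' z
        rw [mem_ball, dist_comm] at hy'y
        rw [mem_ball] at hz'z
        linarith
    _ ≤ diam (s i) := dist_le_diam_of_mem (hb i) hy' hz'

end Metric

theorem stmt_10_general {n : ℕ} (c : ℝ)
    (D : ℕ → Set (EuclideanSpace ℝ (Fin n))) (D₀ : Set (EuclideanSpace ℝ (Fin n)))
    (hDb : ∀ i, Bornology.IsBounded (D i))
    (hdens : ∀ i, ∀ x ∈ frontier (D i), ∀ r : ℝ, 0 < r → r < diam (D i) →
      ENNReal.ofReal (c * r ^ n) < volume (ball x r ∩ D i))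
    (hconv : Tendsto (fun i => volume (symmDiff (D i) D₀)) atTop (nhds 0))
    (hrep : ∀ x ∈ frontier D₀, ∀ r : ℝ, 0 < r →
      0 < volume (D₀ ∩ ball x r) ∧ volume (D₀ ∩ ball x r) < volume (ball x r)) :
    ∀ x ∈ frontier D₀, ∀ r : ℝ, 0 < r → r < diam D₀ →
      ENNReal.ofReal (c * r ^ n) ≤ volume (ball x r ∩ D₀) := by
  intro x hx r hr hrD
  have hcont : Continuous fun ρ : ℝ => ENNReal.ofReal (c * ρ ^ n) :=
    ENNReal.continuous_ofReal.comp (by fun_prop)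
  refine le_of_tendsto ((hcont.tendsto r).mono_left nhdsWithin_le_nhds)
    (eventually_mem_set.2 (Ioo_mem_nhdsLT hr) |>.mono fun r' ⟨hr'₀, hr'r⟩ => ?_)
  have happrox (y) (hy : y ∈ D₀) (δ : ℝ) (hδ : 0 < δ) :
      ∀ᶠ i in atTop, (ball y δ ∩ D i).Nonempty :=
    (eventually_measure_inter_pos_of_tendsto_symmDiff hconv
      (measure_ball_inter_pos_of_mem_closure (fun z hz ρ hρ => (hrep z hz ρ hρ).1)
        (subset_closure hy) hδ)).mono fun i hi => nonempty_of_measure_ne_zero hi.ne'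
  have hδ : 0 < r - r' := sub_pos.2 hr'r
  obtain ⟨hin, hlt⟩ := hrep x hx (r - r') hδ
  have hout : 0 < volume (ball x (r - r') \ D₀) := by
    refine pos_iff_ne_zero.2 fun h0 => hlt.not_ge ?_
    simpa [h0, inter_comm] using measure_le_inter_add_sdiff volume (ball x (r - r')) D₀
  refine le_measure_inter_of_tendsto_symmDiff hconv ?_
  filter_upwards [eventually_lt_diam hDb happrox hr'₀.le (hr'r.trans hrD),
    eventually_inter_frontier_nonempty_of_tendsto_symmDiff hconv (convex_ball _ _).isPreconnected
      (by rwa [inter_comm]) hout] with i hdiam ⟨xi, hxi, hfr⟩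
  calc ENNReal.ofReal (c * r' ^ n) ≤ volume (ball xi r' ∩ D i) :=
        (hdens i xi hfr r' hr'₀ hdiam).le
    _ ≤ volume (ball x r ∩ D i) := by
        gcongr
        refine ball_subset_ball' ?_
        rw [mem_ball] at hxi
        linarith

/-- If `D_i ∈ 𝒟_c` and `χ_{D_i} → χ_D` in `L¹`, then the normalized representative of
`D` (whose boundary points satisfy `0 < |D ∩ B_r(x)| < ωₙ rⁿ` for all `r > 0`) satisfies
`|B_r(x) ∩ D| ≥ c rⁿ` for all `x ∈ ∂D` and `0 < r < diam D`. -/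
theorem stmt_10 {n : ℕ} (c : ℝ) (hc : 0 < c)
    (D : ℕ → Set (EuclideanSpace ℝ (Fin n))) (D₀ : Set (EuclideanSpace ℝ (Fin n)))
    (hDm : ∀ i, MeasurableSet (D i)) (hDb : ∀ i, Bornology.IsBounded (D i))
    (hD₀m : MeasurableSet D₀) (hD₀b : Bornology.IsBounded D₀)
    (hdens : ∀ i, ∀ x ∈ frontier (D i), ∀ r : ℝ, 0 < r → r < diam (D i) →
      ENNReal.ofReal (c * r ^ n) < volume (ball x r ∩ D i))
    (hconv : Tendsto (fun i => volume (symmDiff (D i) D₀)) atTop (nhds 0))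
    (hrep : ∀ x ∈ frontier D₀, ∀ r : ℝ, 0 < r →
      0 < volume (D₀ ∩ ball x r) ∧ volume (D₀ ∩ ball x r) < volume (ball x r)) :
    ∀ x ∈ frontier D₀, ∀ r : ℝ, 0 < r → r < diam D₀ →
      ENNReal.ofReal (c * r ^ n) ≤ volume (ball x r ∩ D₀) :=
  stmt_10_general c D D₀ hDb hdens hconv hrep
end

section
/- For a smooth unit vector field u : U → 𝕊² ⊂ ℝ³ on an open set U ⊂ ℝ³, the pointwise identity (div u)² − tr((∇u)²) = div((div u) u − (∇u) u) holds, and moreover |∇u|² ≥ (div u)² − tr((∇u)²) pointwise. -/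
open MeasureTheory Metric Set Filter
open scoped ENNReal Topology RealInnerProductSpace

noncomputable section

abbrev E3 := EuclideanSpace ℝ (Fin 3)

lemma E3.decomp (v : E3) : v = ∑ i, v i • (EuclideanSpace.single i (1:ℝ)) := by
  ext j
  rw [show (∑ i, v i • (EuclideanSpace.single i (1:ℝ))) j
      = ∑ i, (v i • (EuclideanSpace.single i (1:ℝ))) j from by
    rw [WithLp.ofLp_sum]; exact Finset.sum_apply j Finset.univ _]
  simp [EuclideanSpace.single_apply]

lemma clm_expand (f : E3 →L[ℝ] E3) (v : E3) :
    f v = ∑ i, v i • f (EuclideanSpace.single i 1) := by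
  conv_lhs => rw [E3.decomp v]
  simp

lemma aux_ineq (a00 a01 a02 a10 a11 a12 a20 a21 a22 u0 u1 u2 t : ℝ)
    (ht : t = a00 + a11 + a22)
    (h0 : u0*a00 + u1*a10 + u2*a20 = 0)
    (h1 : u0*a01 + u1*a11 + u2*a21 = 0)
    (h2 : u0*a02 + u1*a12 + u2*a22 = 0)
    (hn : u0^2 + u1^2 + u2^2 = 1) :
    t^2 - (a00*a00 + a01*a10 + a02*a20 + (a10*a01 + a11*a11 + a12*a21)
        + (a20*a02 + a21*a12 + a22*a22))
      ≤ a00^2 + a01^2 + a02^2 + (a10^2+a11^2+a12^2) + (a20^2+a21^2+a22^2) := by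
  have key2 : (a00^2 + a01^2 + a02^2 + a10^2+a11^2+a12^2 + a20^2+a21^2+a22^2) - t^2
      + (a00*a00 + a01*a10 + a02*a20 + a10*a01 + a11*a11 + a12*a21 + a20*a02 + a21*a12 + a22*a22)
      = (1/2) * ((2*a00 - t*(1 - u0*u0))^2 + (2*a11 - t*(1-u1*u1))^2 + (2*a22 - t*(1-u2*u2))^2)
        + (a01+a10+t*(u0*u1))^2 + (a02+a20+t*(u0*u2))^2 + (a12+a21+t*(u1*u2))^2 := by
    subst ht
    linear_combination (-2*(a00+a11+a22)*u0) * h0 + (-2*(a00+a11+a22)*u1) * h1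
      + (-2*(a00+a11+a22)*u2) * h2
      + (-(1/2)*(a00+a11+a22)^2*(u0^2+u1^2+u2^2-1)) * hn
  linarith [key2, sq_nonneg (2*a00 - t*(1 - u0*u0)), sq_nonneg (2*a11 - t*(1-u1*u1)),
    sq_nonneg (2*a22 - t*(1-u2*u2)), sq_nonneg (a01+a10+t*(u0*u1)),
    sq_nonneg (a02+a20+t*(u0*u2)), sq_nonneg (a12+a21+t*(u1*u2))]

/-- Entry `(i, j)` of the Jacobian matrix `∇u`, i.e. `∂_j u_i`. -/
noncomputable def jac (u : E3 → E3) (x : E3) (i j : Fin 3) : ℝ :=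
  fderiv ℝ u x (EuclideanSpace.single j 1) i

/-- The divergence `div u = tr(∇u)`. -/
noncomputable def divg (u : E3 → E3) (x : E3) : ℝ :=
  ∑ i, jac u x i i

/-- For a smooth unit vector field `u : U → 𝕊²` on an open `U ⊆ ℝ³`, the pointwise
identity `(div u)² − tr((∇u)²) = div((div u) u − (∇u) u)` holds, and moreover
`|∇u|² ≥ (div u)² − tr((∇u)²)` pointwise. -/
theorem stmt_16 (U : Set E3) (hU : IsOpen U) (u : E3 → E3)
    (hu : ContDiffOn ℝ (⊤ : ℕ∞) u U) (hunit : ∀ x ∈ U, ‖u x‖ = 1) :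
    ∀ x ∈ U,
      ((divg u x) ^ 2 - (∑ i, ∑ k, jac u x i k * jac u x k i)
        = divg (fun y => (divg u y) • u y - fderiv ℝ u y (u y)) x) ∧
      (divg u x) ^ 2 - (∑ i, ∑ k, jac u x i k * jac u x k i)
        ≤ ∑ i, ∑ j, (jac u x i j) ^ 2 := by
  intro x hx
  constructor
  have hmem : U ∈ 𝓝 x := hU.mem_nhds hx
  have hcA : ContDiffAt ℝ (⊤ : ℕ∞) u x := hu.contDiffAt hmem
  have hu1 : DifferentiableAt ℝ u x := hcA.differentiableAt (by simp)
  set A := fderiv ℝ u x with hA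
  have hfd : ContDiffAt ℝ 1 (fderiv ℝ u) x := hcA.fderiv_right (by exact WithTop.coe_le_coe.mpr le_top)
  have hud : DifferentiableAt ℝ (fderiv ℝ u) x := hfd.differentiableAt one_ne_zero
  set B := fderiv ℝ (fderiv ℝ u) x with hB
  have hBsymm : ∀ v w, B v w = B w v := hcA.isSymmSndFDerivAt (by rw [minSmoothness_of_isRCLikeNormedField]; exact WithTop.coe_le_coe.mpr (le_top : (2 : ℕ∞) ≤ ⊤))
  have hB' : HasFDerivAt (fderiv ℝ u) B x := hud.hasFDerivAt
  set e : Fin 3 → E3 := fun i => EuclideanSpace.single i (1:ℝ) with he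
  -- derivative of the divergence
  set D : Fin 3 → (E3 →L[ℝ] ℝ) := fun i =>
    (EuclideanSpace.proj (𝕜 := ℝ) i).comp (A.comp (0 : E3 →L[ℝ] E3) + B.flip (e i)) with hD
  have hdivD : HasFDerivAt (divg u) (∑ i, D i) x := by
    have h1 : ∀ i : Fin 3, HasFDerivAt (fun y => (fderiv ℝ u y) (e i))
        (A.comp (0 : E3 →L[ℝ] E3) + B.flip (e i)) x := fun i => hB'.clm_apply (hasFDerivAt_const (e i) x)
    have h2 : ∀ i : Fin 3, HasFDerivAt (fun y => (fderiv ℝ u y) (e i) i) (D i) x := by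
      intro i
      exact (EuclideanSpace.proj (𝕜 := ℝ) i).hasFDerivAt.comp x (h1 i)
    exact HasFDerivAt.fun_sum (fun i _ => h2 i)
  -- derivative of the vector field g
  have hg1 : HasFDerivAt (fun y => divg u y • u y)
      (divg u x • A + (∑ i, D i).smulRight (u x)) x := hdivD.smul hu1.hasFDerivAt
  have hg2 : HasFDerivAt (fun y => fderiv ℝ u y (u y))
      (A.comp A + B.flip (u x)) x := hB'.clm_apply hu1.hasFDerivAt
  have hg : HasFDerivAt (fun y => divg u y • u y - fderiv ℝ u y (u y))
      ((divg u x • A + (∑ i, D i).smulRight (u x)) - (A.comp A + B.flip (u x))) x :=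
    hg1.sub hg2
  have hfg := hg.fderiv
  have key : ∀ j : Fin 3, jac (fun y => divg u y • u y - fderiv ℝ u y (u y)) x j j
      = divg u x * jac u x j j + (∑ i, B (e j) (e i) i) * u x j
        - (∑ k, jac u x k j * jac u x j k) - (∑ k, u x k * B (e j) (e k) j) := by
    intro j
    rw [jac, hfg]
    simp only [ContinuousLinearMap.sub_apply, ContinuousLinearMap.add_apply,
      ContinuousLinearMap.comp_apply, ContinuousLinearMap.smulRight_apply,
      ContinuousLinearMap.coe_smul', Pi.smul_apply, ContinuousLinearMap.flip_apply,
      ContinuousLinearMap.zero_apply, map_zero, zero_add]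
    have e1 : A (A (e j)) j = ∑ k, jac u x k j * jac u x j k := by
      rw [clm_expand A (A (e j))]
      rw [show (∑ k, (A (e j)) k • A (EuclideanSpace.single k 1)) j
          = ∑ k, ((A (e j)) k • A (EuclideanSpace.single k 1)) j from
        by rw [WithLp.ofLp_sum]; exact Finset.sum_apply j Finset.univ _]
      simp only [PiLp.smul_apply, smul_eq_mul]
      rfl
    have e2 : B (e j) (u x) j = ∑ k, u x k * B (e j) (e k) j := by
      rw [clm_expand (B (e j)) (u x)]
      rw [show (∑ k, (u x) k • (B (e j)) (EuclideanSpace.single k 1)) j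
          = ∑ k, ((u x) k • (B (e j)) (EuclideanSpace.single k 1)) j from
        by rw [WithLp.ofLp_sum]; exact Finset.sum_apply j Finset.univ _]
      simp only [PiLp.smul_apply, smul_eq_mul]
      rfl
    have e3 : ((∑ i, D i) (e j)) = ∑ i, B (e j) (e i) i := by
      rw [ContinuousLinearMap.sum_apply]
      refine Finset.sum_congr rfl fun i _ => ?_
      simp [hD, hBsymm (e i) (e j)]
    have e4 : (divg u x • A) (e j) j = divg u x * jac u x j j := rfl
    simp only [PiLp.sub_apply, PiLp.add_apply, PiLp.smul_apply, smul_eq_mul]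
    rw [show EuclideanSpace.single j (1:ℝ) = e j from rfl, e1, e2, e3]
    rw [show A (e j) j = jac u x j j from rfl]
    ring
  have hsum : divg (fun y => divg u y • u y - fderiv ℝ u y (u y)) x
      = ∑ j, (divg u x * jac u x j j + (∑ i, B (e j) (e i) i) * u x j
        - (∑ k, jac u x k j * jac u x j k) - (∑ k, u x k * B (e j) (e k) j)) := by
    rw [divg]; exact Finset.sum_congr rfl fun j _ => key j
  rw [hsum]
  simp only [divg, Fin.sum_univ_three]
  rw [hBsymm (e 1) (e 0), hBsymm (e 2) (e 0), hBsymm (e 2) (e 1)]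
  ring
  · -- the inequality
    have hmem : U ∈ 𝓝 x := hU.mem_nhds hx
    have hcA : ContDiffAt ℝ (⊤ : ℕ∞) u x := hu.contDiffAt hmem
    have hu1 : DifferentiableAt ℝ u x := hcA.differentiableAt (by simp)
    set A := fderiv ℝ u x with hA
    have horth : ∀ j : Fin 3, ∑ i, u x i * jac u x i j = 0 := by
      intro j
      have hF : HasFDerivAt (fun y => ⟪u y, u y⟫)
          ((fderivInnerCLM ℝ (u x, u x)).comp (A.prod A)) x :=
        HasFDerivAt.inner ℝ hu1.hasFDerivAt hu1.hasFDerivAt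
      have heq : (fun _ : E3 => (1:ℝ)) =ᶠ[𝓝 x] (fun y => ⟪u y, u y⟫) := by
        filter_upwards [hmem] with y hy
        rw [real_inner_self_eq_norm_sq, hunit y hy]; norm_num
      have h2 := hF.congr_of_eventuallyEq heq
      have h3 := h2.unique (hasFDerivAt_const 1 x)
      have h4 := congrArg (fun (L : E3 →L[ℝ] ℝ) => L (EuclideanSpace.single j 1)) h3
      simp only [ContinuousLinearMap.comp_apply, ContinuousLinearMap.prod_apply,
        fderivInnerCLM_apply, ContinuousLinearMap.zero_apply] at h4
      have h5 : ⟪A (EuclideanSpace.single j 1), u x⟫ = 0 := by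
        rw [real_inner_comm] at h4; linarith
      rw [PiLp.inner_apply] at h5
      simpa [mul_comm, jac] using h5
    have hn : ∑ i, u x i ^ 2 = 1 := by
      have h6 : ⟪u x, u x⟫ = 1 := by
        rw [real_inner_self_eq_norm_sq, hunit x hx]; norm_num
      rw [PiLp.inner_apply] at h6
      simpa [sq] using h6
    have h0 := horth 0; have h1 := horth 1; have h2 := horth 2
    simp only [Fin.sum_univ_three] at h0 h1 h2 hn ⊢
    simp only [divg, Fin.sum_univ_three]
    set t : ℝ := jac u x 0 0 + jac u x 1 1 + jac u x 2 2 with ht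
    exact aux_ineq _ _ _ _ _ _ _ _ _ _ _ _ _ ht h0 h1 h2 hn
end
end
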